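/- Let S_n be an independent dominating set of Q_n. Define S_{n+1} ⊆ {0,1}^{n+1} as follows: for each vertex v ∈ S_n with bits b_{n-1}…b_1 b_0, choose a bit b_n ∈ {0,1} (say b_n = 0) and include both the vertex b_n b_{n-1}…b_1 b_0 and the vertex obtained by complementing both the new leading bit and the last bit, i.e., (1−b_n) b_{n-1}…b_1 (1−b_0). Then S_{n+1} is an independent set of Q_{n+1} with |S_{n+1}| = 2|S_n|. -/

import Mathlib

open Finset Function

lemma hd_cons {n : ℕ} (a b : Bool) (u v : Fin n → Bool) :
    hammingDist (Fin.cons a u : Fin (n+1) → Bool) (Fin.cons b v) =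
      (if a = b then 0 else 1) + hammingDist u v := by
  unfold hammingDist
  rw [Finset.card_filter, Finset.card_filter, Fin.sum_univ_succ]
  simp only [Fin.cons_succ, Fin.cons_zero]
  by_cases h : a = b <;> simp [h, Finset.card_filter]



lemma hd_update {n : ℕ} (i : Fin n) (u v : Fin n → Bool) :
    hammingDist (Function.update u i (!(u i))) (Function.update v i (!(v i))) =
      hammingDist u v := by
  unfold hammingDist
  congr 1
  apply Finset.filter_congr
  intro j _
  by_cases h : j = i
  · subst h; simp
  · simp [Function.update_of_ne h]

lemma hd_update_self {n : ℕ} (i : Fin n) (v : Fin n → Bool) :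
    hammingDist (Function.update v i (!(v i))) v = 1 := by
  unfold hammingDist
  rw [show ({j | Function.update v i (!(v i)) j ≠ v j} : Finset (Fin n)) = {i} from ?_]
  · simp
  · ext j
    by_cases h : j = i
    · subst h; simp
    · simp [Function.update_of_ne h, h]

lemma cons_inj {n : ℕ} (a : Bool) :
    Function.Injective (fun v : Fin n → Bool => (Fin.cons a v : Fin (n+1) → Bool)) := by
  intro u v h
  funext j
  have := congrFun h j.succ
  simpa using this

lemma upd_inj {n : ℕ} (i : Fin n) : Function.Injective
    (fun v : Fin n → Bool => Function.update v i (!(v i))) := by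
  intro u v h
  funext j
  by_cases hj : j = i
  · subst hj
    have := congrFun h j
    simpa using this
  · have := congrFun h j
    simpa [Function.update_of_ne hj] using this



/-- The n-dimensional hypercube graph on binary n-tuples, adjacency = Hamming distance 1. -/
def Q (n : ℕ) : SimpleGraph (Fin n → Bool) where
  Adj u v := hammingDist u v = 1
  symm := ⟨fun u v h => (hammingDist_comm v u).trans h⟩
  loopless := ⟨fun u h => by simp [hammingDist_self] at h⟩

instance (n : ℕ) : DecidableRel (Q n).Adj := fun u v =>
  inferInstanceAs (Decidable (hammingDist u v = 1))

/-- S is an independent set of Q n. -/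
def IsIndep {n : ℕ} (S : Set (Fin n → Bool)) : Prop :=
  ∀ u ∈ S, ∀ v ∈ S, ¬ (Q n).Adj u v

/-- S is a dominating set of Q n. -/
def IsDom {n : ℕ} (S : Set (Fin n → Bool)) : Prop :=
  ∀ v, v ∉ S → ∃ u ∈ S, (Q n).Adj u v

/-- The independent domination number of Q n. -/
noncomputable def alpha (n : ℕ) : ℕ :=
  sInf {m | ∃ S : Finset (Fin n → Bool),
    IsIndep (S : Set (Fin n → Bool)) ∧ IsDom (S : Set (Fin n → Bool)) ∧ S.card = m}

/-- The one-dimension extension of a set S ⊆ {0,1}^n: for each v ∈ S include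
    0·v and the vertex with both the new leading bit and the last bit of v
    complemented. -/
def extSet {n : ℕ} (hn : 0 < n) (S : Finset (Fin n → Bool)) :
    Finset (Fin (n + 1) → Bool) :=
  S.image (fun v => Fin.cons false v) ∪
    S.image (fun v => Fin.cons true (Function.update v ⟨0, hn⟩ (!(v ⟨0, hn⟩))))

/-- Given an independent dominating set S of Q_n, the extension is an
    independent set of Q_{n+1} of size 2|S|. -/
theorem extension_indep {n : ℕ} (hn : 0 < n) (S : Finset (Fin n → Bool))
    (hi : IsIndep (S : Set (Fin n → Bool))) (hd : IsDom (S : Set (Fin n → Bool))) :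
    IsIndep ((extSet hn S : Finset (Fin (n + 1) → Bool)) : Set (Fin (n + 1) → Bool)) ∧
    (extSet hn S).card = 2 * S.card := by
  constructor
  · intro x hx y hy hadj
    have hadj' : hammingDist x y = 1 := hadj
    simp only [extSet, Finset.coe_union, Finset.coe_image, Set.mem_union, Set.mem_image,
      Finset.mem_coe] at hx hy
    set i : Fin n := ⟨0, hn⟩
    rcases hx with ⟨u, hu, rfl⟩ | ⟨u, hu, rfl⟩ <;>
      rcases hy with ⟨v, hv, rfl⟩ | ⟨v, hv, rfl⟩ <;>
      rw [hd_cons] at hadj' <;> simp at hadj'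
    · exact hi u hu v hv hadj'
    · have h1 : u = Function.update v i (!(v i)) := hadj'
      exact hi u hu v hv (show hammingDist u v = 1 by
        rw [h1]; exact hd_update_self i v)
    · have h1 : Function.update u i (!(u i)) = v := hadj'
      exact hi u hu v hv (show hammingDist u v = 1 by
        rw [← h1, hammingDist_comm]; exact hd_update_self i u)
    · rw [hd_update] at hadj'
      exact hi u hu v hv hadj'
  · have hdisj : Disjoint (S.image (fun v => (Fin.cons false v : Fin (n+1) → Bool)))
        (S.image (fun v => (Fin.cons true
          (Function.update v ⟨0, hn⟩ (!(v ⟨0, hn⟩))) : Fin (n+1) → Bool))) := by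
      rw [Finset.disjoint_left]
      rintro a ha hb
      obtain ⟨u, -, rfl⟩ := Finset.mem_image.1 ha
      obtain ⟨v, -, h⟩ := Finset.mem_image.1 hb
      have := congrFun h 0
      simp at this
    rw [extSet, Finset.card_union_of_disjoint hdisj,
      Finset.card_image_of_injective _ (cons_inj false),
      Finset.card_image_of_injective _
        (fun u v h => upd_inj ⟨0, hn⟩ (cons_inj true h))]
    ring
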